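/- arXiv:2604.15282 — 7 statements merged into one kernel-verified Lean document; each statement's English description precedes it below -/
import Mathlib

section
/- Let C be a (k,g,r,l)-LRC over F_q. Then its minimum distance satisfies d(C) ≤ g + l + 1. -/
open Finset

/-- Minimum Hamming distance of the code `C`: the least Hamming distance between two
distinct codewords (with junk value `sInf ∅ = 0` if the code has at most one codeword). -/
noncomputable def codeMinDist {F : Type*} [DecidableEq F] {k n : ℕ}
    (C : (Fin k → F) → (Fin n → F)) : ℕ :=
  sInf {d | ∃ m m' : Fin k → F, C m ≠ C m' ∧ hammingDist (C m) (C m') = d}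

/-- The punctured code `C_S` has minimum distance at least `δ`: whenever two codewords
differ somewhere on `S`, they differ in at least `δ` coordinates of `S`. -/
def puncturedDistGe {F : Type*} [DecidableEq F] {k n : ℕ}
    (C : (Fin k → F) → (Fin n → F)) (S : Finset (Fin n)) (δ : ℕ) : Prop :=
  ∀ m m' : Fin k → F, (∃ i ∈ S, C m i ≠ C m' i) →
    δ ≤ (S.filter fun i => C m i ≠ C m' i).card

/-- `C` is a systematic `(k, g, r, l)`-LRC of length `n = k + μ·l + g` with `μ = k/r`
local groups: `info` enumerates the `k` information coordinates (on which `C` is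
systematic), `grp` assigns each information coordinate to one of the `μ` local groups
(each of size `r`), and `lp` enumerates, for each local group, its `l` local parity
coordinates, which are functions only of the information symbols of that group and are
distinct from the information coordinates.  Each locality set `S_τ` (the `r` information
coordinates of group `τ` together with its `l` local parity coordinates) has punctured
minimum distance at least `l + 1`.  The remaining `g` coordinates of the code are the
global parity coordinates. -/
structure IsLRC {F : Type*} [DecidableEq F] (k g r l μ n : ℕ)
    (C : (Fin k → F) → (Fin n → F)) (info : Fin k ↪ Fin n)
    (grp : Fin k → Fin μ) (lp : Fin μ × Fin l ↪ Fin n) : Prop where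
  hr : 1 ≤ r
  hl : 1 ≤ l
  hμ : 1 ≤ μ
  hk : k = r * μ
  hn : n = k + μ * l + g
  inj : Function.Injective C
  systematic : ∀ (m : Fin k → F) (j : Fin k), C m (info j) = m j
  grp_card : ∀ τ : Fin μ, (univ.filter fun j => grp j = τ).card = r
  lp_not_info : ∀ (pb : Fin μ × Fin l) (j : Fin k), lp pb ≠ info j
  lp_local : ∀ (τ : Fin μ) (b : Fin l) (m m' : Fin k → F),
      (∀ j, grp j = τ → m j = m' j) → C m (lp (τ, b)) = C m' (lp (τ, b))
  locality : ∀ τ : Fin μ, puncturedDistGe C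
      (((univ.filter fun j => grp j = τ).image info) ∪ (univ.image fun b => lp (τ, b)))
      (l + 1)

/-- `C` is an optimal-distance `(k, g, r, l)`-LRC: its minimum distance is `g + l + 1`. -/
def IsOptLRC {F : Type*} [DecidableEq F] (k g r l μ n : ℕ)
    (C : (Fin k → F) → (Fin n → F)) (info : Fin k ↪ Fin n)
    (grp : Fin k → Fin μ) (lp : Fin μ × Fin l ↪ Fin n) : Prop :=
  IsLRC k g r l μ n C info grp lp ∧ codeMinDist C = g + l + 1

/-- Let `C` be a `(k,g,r,l)`-LRC over a finite field `F`.
Then its minimum distance satisfies `d(C) ≤ g + l + 1`. -/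
theorem lrc_minDist_le_global_plus_local_plus_one
    {F : Type*} [Field F] [Fintype F] [DecidableEq F]
    {k g r l μ n : ℕ} (C : (Fin k → F) → (Fin n → F)) (info : Fin k ↪ Fin n)
    (grp : Fin k → Fin μ) (lp : Fin μ × Fin l ↪ Fin n)
    (h : IsLRC k g r l μ n C info grp lp) :
    codeMinDist C ≤ g + l + 1 := by
  
  -- Construct two codewords differing in one information symbol.
  obtain ⟨hr, hl, hμ, hk, hn, hinj, hsys, hgc, hni, hloc, _⟩ := h
  have hkpos : 0 < k := by
    have : 0 < r * μ := Nat.mul_pos hr hμ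
    omega
  set j₀ : Fin k := ⟨0, hkpos⟩
  set τ : Fin μ := grp j₀
  set m : Fin k → F := fun _ => 0
  set m' : Fin k → F := Function.update m j₀ 1
  have hmm' : m j₀ ≠ m' j₀ := by simp [m, m']
  have hne : C m ≠ C m' := fun hc => hmm' (by rw [← hsys m j₀, ← hsys m' j₀, hc])
  -- the set of agreeing coordinates
  set A : Finset (Fin n) :=
    ((univ.filter fun j => j ≠ j₀).image info) ∪
      ((univ.filter fun p : Fin μ × Fin l => p.1 ≠ τ).image lp) with hA
  have hagree : ∀ i ∈ A, C m i = C m' i := by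
    intro i hi
    rcases Finset.mem_union.1 hi with hi | hi
    · obtain ⟨j, hj, rfl⟩ := Finset.mem_image.1 hi
      have hj' : j ≠ j₀ := (Finset.mem_filter.1 hj).2
      rw [hsys m j, hsys m' j]
      simp [m', Function.update_of_ne hj']
    · obtain ⟨p, hp, rfl⟩ := Finset.mem_image.1 hi
      have hp' : p.1 ≠ τ := (Finset.mem_filter.1 hp).2
      have := hloc p.1 p.2 m m' ?_
      · simpa using this
      · intro j hj
        have hjj : j ≠ j₀ := by
          intro h'; subst h'; exact hp' hj.symm
        simp [m', Function.update_of_ne hjj]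
  have hAcard : A.card = (k - 1) + (μ - 1) * l := by
    rw [hA, Finset.card_union_of_disjoint, Finset.card_image_of_injective _ info.injective,
        Finset.card_image_of_injective _ lp.injective]
    · congr 1
      · rw [Finset.filter_ne', Finset.card_erase_of_mem (Finset.mem_univ _), Finset.card_univ,
          Fintype.card_fin]
      · have : (univ.filter fun p : Fin μ × Fin l => p.1 ≠ τ)
            = (univ.filter fun t : Fin μ => t ≠ τ) ×ˢ (univ : Finset (Fin l)) := by
          ext p; simp [Finset.mem_product]
        rw [this, Finset.card_product, Finset.filter_ne', Finset.card_erase_of_mem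
          (Finset.mem_univ _)]
        simp
    · rw [Finset.disjoint_left]
      rintro i hi1 hi2
      obtain ⟨j, _, rfl⟩ := Finset.mem_image.1 hi1
      obtain ⟨p, _, hpi⟩ := Finset.mem_image.1 hi2
      exact hni p j hpi
  have hdist : hammingDist (C m) (C m') ≤ g + l + 1 := by
    have hsub : (univ.filter fun i => C m i ≠ C m' i) ⊆ univ \ A := by
      intro i hi
      rw [Finset.mem_sdiff]
      exact ⟨Finset.mem_univ _, fun hiA => (Finset.mem_filter.1 hi).2 (hagree i hiA)⟩
    have hcard : (univ.filter fun i => C m i ≠ C m' i).card ≤ n - A.card := by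
      calc _ ≤ (univ \ A).card := Finset.card_le_card hsub
        _ = n - A.card := by
            rw [Finset.card_sdiff_of_subset (Finset.subset_univ _), Finset.card_univ, Fintype.card_fin]
    have hml : l ≤ μ * l := Nat.le_mul_of_pos_left l hμ
    have hμl : (μ - 1) * l = μ * l - l := by rw [Nat.sub_one_mul]
    have : hammingDist (C m) (C m') = (univ.filter fun i => C m i ≠ C m' i).card := rfl
    rw [this]
    omega
  calc codeMinDist C ≤ hammingDist (C m) (C m') :=
        Nat.sInf_le ⟨m, m', hne, rfl⟩
    _ ≤ g + l + 1 := hdist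
end

section
/- Let C be an optimal-distance (k,g,r,l)-LRC over F_q. Then every global parity coordinate of C depends on every information coordinate: for each global parity coordinate i and each j ∈ [k], there exist messages m, m' ∈ F_q^k that differ only in coordinate j such that C(m)_i ≠ C(m')_i. -/
open Finset

/-- Let `C` be an optimal-distance `(k,g,r,l)`-LRC over a finite field.
Then every global parity coordinate of `C` (i.e. every coordinate that is neither an
information coordinate nor a local parity coordinate) depends on every information
coordinate: for each global parity coordinate `i` and each `j ∈ [k]`, there exist
messages `m, m'` that differ only in coordinate `j` such that `C(m)_i ≠ C(m')_i`. -/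
theorem optimal_lrc_global_parity_depends_on_all
    {F : Type*} [Field F] [Fintype F] [DecidableEq F]
    {k g r l μ n : ℕ} (C : (Fin k → F) → (Fin n → F)) (info : Fin k ↪ Fin n)
    (grp : Fin k → Fin μ) (lp : Fin μ × Fin l ↪ Fin n)
    (h : IsLRC k g r l μ n C info grp lp)
    (hopt : codeMinDist C = g + l + 1)
    (i : Fin n) (hi_info : ∀ j : Fin k, i ≠ info j)
    (hi_lp : ∀ pb : Fin μ × Fin l, i ≠ lp pb)
    (j : Fin k) :
    ∃ m m' : Fin k → F,
      m j ≠ m' j ∧ (∀ j' : Fin k, j' ≠ j → m j' = m' j') ∧ C m i ≠ C m' i := by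
  classical
  by_contra hcon
  push_neg at hcon
  set m : Fin k → F := fun _ => 0 with hm
  set m' : Fin k → F := Function.update m j 1 with hm'
  have hjj : m j ≠ m' j := by
    simp [hm, hm']
  have hoff : ∀ j' : Fin k, j' ≠ j → m j' = m' j' := by
    intro j' hj'
    simp [hm', Function.update_of_ne hj']
  have heqi : C m i = C m' i := hcon m m' hjj hoff
  have hCne : C m ≠ C m' := by
    intro h'
    apply hjj
    rw [← h.systematic m j, ← h.systematic m' j, h']
  set U : Finset (Fin n) := univ.image info ∪ univ.image lp with hU
  set G : Finset (Fin n) := univ \ U with hG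
  have hUcard : U.card = k + μ * l := by
    rw [hU, card_union_of_disjoint, card_image_of_injective _ info.injective,
      card_image_of_injective _ lp.injective, card_univ, card_univ,
      Fintype.card_fin, Fintype.card_prod, Fintype.card_fin, Fintype.card_fin]
    rw [disjoint_left]
    intro a ha hb
    simp only [mem_image, mem_univ, true_and] at ha hb
    obtain ⟨j', hj'⟩ := ha
    obtain ⟨pb, hpb⟩ := hb
    exact h.lp_not_info pb j' (hpb.trans hj'.symm)
  have hGcard : G.card = g := by
    rw [hG, card_sdiff_of_subset (subset_univ U), card_univ, Fintype.card_fin, hUcard, h.hn]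
    omega
  have hiG : i ∈ G := by
    rw [hG, mem_sdiff]
    refine ⟨mem_univ i, ?_⟩
    rw [hU, mem_union]
    rintro (hin | hin) <;> simp only [mem_image, mem_univ, true_and] at hin
    · obtain ⟨j', hj'⟩ := hin; exact hi_info j' hj'.symm
    · obtain ⟨pb, hpb⟩ := hin; exact hi_lp pb hpb.symm
  have hg1 : 1 ≤ g := by
    have := card_pos.mpr ⟨i, hiG⟩
    omega
  set D : Finset (Fin n) := univ.filter fun i' => C m i' ≠ C m' i' with hD
  have hsub : D ⊆ insert (info j) ((univ.image fun b => lp (grp j, b)) ∪ G.erase i) := by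
    intro i' hi'
    rw [hD, mem_filter] at hi'
    have hne := hi'.2
    by_cases h1 : ∃ j', i' = info j'
    · obtain ⟨j', rfl⟩ := h1
      by_cases hj' : j' = j
      · subst hj'; exact mem_insert_self _ _
      · exact absurd (by rw [h.systematic, h.systematic]; exact hoff j' hj') hne
    by_cases h2 : ∃ pb, i' = lp pb
    · obtain ⟨⟨τ, b⟩, rfl⟩ := h2
      by_cases hτ : τ = grp j
      · subst hτ
        exact mem_insert_of_mem (mem_union_left _ (mem_image_of_mem _ (mem_univ b)))
      · refine absurd (h.lp_local τ b m m' ?_) hne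
        intro j'' hj''
        refine hoff j'' ?_
        rintro rfl
        exact hτ hj''.symm
    · refine mem_insert_of_mem (mem_union_right _ ?_)
      rw [mem_erase]
      refine ⟨?_, ?_⟩
      · rintro rfl; exact hne heqi
      · rw [hG, mem_sdiff]
        refine ⟨mem_univ _, ?_⟩
        rw [hU, mem_union]
        rintro (hin | hin) <;> simp only [mem_image, mem_univ, true_and] at hin
        · obtain ⟨j', hj'⟩ := hin; exact h1 ⟨j', hj'.symm⟩
        · obtain ⟨pb, hpb⟩ := hin; exact h2 ⟨pb, hpb.symm⟩
  have hDcard : D.card ≤ g + l := by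
    calc D.card ≤ (insert (info j) ((univ.image fun b => lp (grp j, b)) ∪ G.erase i)).card :=
          card_le_card hsub
      _ ≤ ((univ.image fun b => lp (grp j, b)) ∪ G.erase i).card + 1 := card_insert_le _ _
      _ ≤ ((univ.image fun b => lp (grp j, b)).card + (G.erase i).card) + 1 :=
          by exact Nat.add_le_add_right (card_union_le _ _) 1
      _ ≤ (l + (g - 1)) + 1 := by
          refine Nat.add_le_add_right (Nat.add_le_add ?_ ?_) 1
          · calc (univ.image fun b => lp (grp j, b)).card ≤ (univ : Finset (Fin l)).card :=
                card_image_le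
              _ = l := by rw [card_univ, Fintype.card_fin]
          · rw [card_erase_of_mem hiG, hGcard]
      _ = g + l := by omega
  have hd : hammingDist (C m) (C m') = D.card := by
    rfl
  have hle : codeMinDist C ≤ D.card := by
    apply Nat.sInf_le
    exact ⟨m, m', hCne, hd⟩
  rw [hopt] at hle
  omega
end

section
/- Let C be a (k,g,r,l)-LRC over F_q. Then every local parity coordinate depends on every information coordinate of its own local group: for each local group τ, each local parity coordinate a associated with group τ, and each information coordinate j belonging to group τ, there exist messages m, m' ∈ F_q^k that differ only in coordinate j such that C(m)_a ≠ C(m')_a. -/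
open Finset

/-- Let `C` be a `(k,g,r,l)`-LRC over a finite field.  Then every local
parity coordinate depends on every information coordinate of its own local group: for
each local group `τ`, each local parity coordinate `lp (τ, b)` of group `τ`, and each
information coordinate `j` belonging to group `τ`, there exist messages `m, m'` that
differ only in coordinate `j` such that `C(m)_{lp (τ,b)} ≠ C(m')_{lp (τ,b)}`. -/
theorem lrc_local_parity_depends_on_own_group
    {F : Type*} [Field F] [Fintype F] [DecidableEq F]
    {k g r l μ n : ℕ} (C : (Fin k → F) → (Fin n → F)) (info : Fin k ↪ Fin n)
    (grp : Fin k → Fin μ) (lp : Fin μ × Fin l ↪ Fin n)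
    (h : IsLRC k g r l μ n C info grp lp)
    (τ : Fin μ) (b : Fin l) (j : Fin k) (hj : grp j = τ) :
    ∃ m m' : Fin k → F,
      m j ≠ m' j ∧ (∀ j' : Fin k, j' ≠ j → m j' = m' j') ∧
        C m (lp (τ, b)) ≠ C m' (lp (τ, b)) := by
  classical
  set m : Fin k → F := Function.update (0 : Fin k → F) j 1 with hm
  set m' : Fin k → F := 0 with hm'
  have hmj : m j = 1 := by simp [hm]
  have hmj' : ∀ j' : Fin k, j' ≠ j → m j' = m' j' := by
    intro j' hj'
    simp [hm, hm', Function.update_of_ne hj']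
  refine ⟨m, m', by simp [hmj, hm'], hmj', ?_⟩
  intro hcontra
  set Sinfo := ((univ.filter fun j' => grp j' = τ).image info) with hSinfo
  set Slp := (univ.image fun b' => lp (τ, b')) with hSlp
  have hmem : info j ∈ Sinfo ∪ Slp := by
    apply mem_union_left
    exact mem_image_of_mem _ (by simp [hj])
  have hdiff : C m (info j) ≠ C m' (info j) := by
    rw [h.systematic m j, h.systematic m' j, hmj]
    simp [hm']
  have hloc := h.locality τ m m' ⟨info j, hmem, hdiff⟩
  -- bound the filter on the union
  have hfilter_union :
      ((Sinfo ∪ Slp).filter fun i => C m i ≠ C m' i)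
        ⊆ (Sinfo.filter fun i => C m i ≠ C m' i) ∪
          (Slp.filter fun i => C m i ≠ C m' i) := by
    intro i hi
    rw [mem_filter, mem_union] at hi
    rcases hi with ⟨hi1 | hi1, hi2⟩
    · exact mem_union_left _ (mem_filter.mpr ⟨hi1, hi2⟩)
    · exact mem_union_right _ (mem_filter.mpr ⟨hi1, hi2⟩)
  have hinfo_sub : (Sinfo.filter fun i => C m i ≠ C m' i) ⊆ {info j} := by
    intro i hi
    rw [mem_filter] at hi
    obtain ⟨hi1, hi2⟩ := hi
    rw [hSinfo, mem_image] at hi1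
    obtain ⟨j', _, rfl⟩ := hi1
    rw [h.systematic m j', h.systematic m' j'] at hi2
    have : j' = j := by
      by_contra hne
      exact hi2 (hmj' j' hne)
    simp [this]
  have hlp_sub : (Slp.filter fun i => C m i ≠ C m' i)
      ⊆ (univ.erase b).image fun b' => lp (τ, b') := by
    intro i hi
    rw [mem_filter] at hi
    obtain ⟨hi1, hi2⟩ := hi
    rw [hSlp, mem_image] at hi1
    obtain ⟨b', _, rfl⟩ := hi1
    refine mem_image_of_mem _ (mem_erase.mpr ⟨?_, mem_univ _⟩)
    rintro rfl
    exact hi2 hcontra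
  have hcard1 : (Sinfo.filter fun i => C m i ≠ C m' i).card ≤ 1 := by
    have := card_le_card hinfo_sub
    simpa using this
  have hcard2 : (Slp.filter fun i => C m i ≠ C m' i).card ≤ l - 1 := by
    calc (Slp.filter fun i => C m i ≠ C m' i).card
        ≤ ((univ.erase b).image fun b' => lp (τ, b')).card := card_le_card hlp_sub
      _ ≤ (univ.erase b).card := card_image_le
      _ = l - 1 := by simp [card_erase_of_mem]
  have htot : ((Sinfo ∪ Slp).filter fun i => C m i ≠ C m' i).card ≤ 1 + (l - 1) := by
    calc ((Sinfo ∪ Slp).filter fun i => C m i ≠ C m' i).card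
        ≤ ((Sinfo.filter fun i => C m i ≠ C m' i) ∪
            (Slp.filter fun i => C m i ≠ C m' i)).card := card_le_card hfilter_union
      _ ≤ (Sinfo.filter fun i => C m i ≠ C m' i).card +
            (Slp.filter fun i => C m i ≠ C m' i).card := card_union_le _ _
      _ ≤ 1 + (l - 1) := Nat.add_le_add hcard1 hcard2
  have hl1 : 1 + (l - 1) = l := by have hl := h.hl; omega
  have : l + 1 ≤ l := by
    have hl := h.hl
    calc l + 1 ≤ ((Sinfo ∪ Slp).filter fun i => C m i ≠ C m' i).card := hloc
      _ ≤ 1 + (l - 1) := htot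
      _ = l := by omega
  omega
end

section
/- Let Z_1, …, Z_n be random variables and f_1, …, f_n deterministic functions on their respective ranges. Let A, B, D ⊆ [n] be pairwise disjoint subsets and let A' ⊆ A and B' ⊆ B be such that the random variables (f_i(Z_i))_{i ∈ (A∪B)\(A'∪B')} are mutually conditionally independent given f_D(Z_D). Then I(f_A(Z_A); f_B(Z_B) | f_D(Z_D)) ≤ H(f_{A'}(Z_{A'}) | f_D(Z_D)) + H(f_{B'}(Z_{B'}) | f_D(Z_D)). -/
/-!
Expanding `I(A;B|D) = H(A|D) + H(B|D) - H(A ∪ B|D)`, subadditivity of conditional entropy gives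
`H(A|D) ≤ H(A'|D) + ∑_{i ∈ A \ A'} H(f_i|D)`, and likewise for `B`. As `A` and `B` are disjoint,
`(A ∪ B) \ (A' ∪ B')` is the disjoint union of `A \ A'` and `B \ B'`, so conditional independence
turns the two sums into `H((A ∪ B) \ (A' ∪ B')|D) ≤ H(A ∪ B|D)`. Subadditivity comes from
submodularity of entropy, which is Gibbs' inequality `log x ≤ x - 1` applied to the ratio
`p(x,z) p(y,z) / (p(x,y,z) p(z))`.
-/

open Finset

open scoped Classical in
/-- Probability that the random variable `X` takes the value `s`, under the
probability mass function `p` on the finite sample space `Ω`. -/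
noncomputable def prEq {Ω : Type*} [Fintype Ω] {S : Type*} (p : Ω → ℝ) (X : Ω → S) (s : S) : ℝ :=
  ∑ ω, if X ω = s then p ω else 0

/-- Shannon entropy `H(X)` of the random variable `X` under the pmf `p`. -/
noncomputable def entropy {Ω : Type*} [Fintype Ω] {S : Type*} (p : Ω → ℝ) (X : Ω → S) : ℝ :=
  -∑ ω, p ω * Real.log (prEq p X (X ω))

/-- Conditional entropy `H(X | Y) = H(X, Y) - H(Y)`. -/
noncomputable def condEntropy {Ω : Type*} [Fintype Ω] {S T : Type*}
    (p : Ω → ℝ) (X : Ω → S) (Y : Ω → T) : ℝ :=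
  entropy p (fun ω => (X ω, Y ω)) - entropy p Y

/-- Conditional mutual information `I(X ; Y | Z) = H(X|Z) + H(Y|Z) - H(X,Y|Z)`. -/
noncomputable def condMI {Ω : Type*} [Fintype Ω] {S T U : Type*}
    (p : Ω → ℝ) (X : Ω → S) (Y : Ω → T) (Z : Ω → U) : ℝ :=
  condEntropy p X Z + condEntropy p Y Z - condEntropy p (fun ω => (X ω, Y ω)) Z

/-- The tuple of random variables `(Z i)_{i ∈ A}`, as a single random variable. -/
def tupleOn {Ω : Type*} {ι : Type*} {S : ι → Type*}
    (Z : (i : ι) → Ω → S i) (A : Finset ι) (ω : Ω) :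
    ∀ i : {x : ι // x ∈ A}, S i.1 := fun i => Z i.1 ω

section Distribution

open scoped Classical

variable {Ω : Type*} [Fintype Ω] {S T U : Type*} {p : Ω → ℝ}

lemma prEq_eq_sum_filter (p : Ω → ℝ) (X : Ω → S) (s : S) :
    prEq p X s = ∑ ω with X ω = s, p ω := by
  rw [prEq, sum_filter]

lemma prEq_nonneg (hp0 : ∀ ω, 0 ≤ p ω) (X : Ω → S) (s : S) : 0 ≤ prEq p X s := by
  rw [prEq_eq_sum_filter]
  exact sum_nonneg fun ω _ => hp0 ω

lemma le_prEq_self (hp0 : ∀ ω, 0 ≤ p ω) (X : Ω → S) (ω : Ω) : p ω ≤ prEq p X (X ω) := by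
  rw [prEq_eq_sum_filter]
  exact single_le_sum (fun ω _ => hp0 ω) (by simp)

lemma prEq_self_pos (hp0 : ∀ ω, 0 ≤ p ω) (X : Ω → S) {ω : Ω} (hω : 0 < p ω) :
    0 < prEq p X (X ω) :=
  hω.trans_le (le_prEq_self hp0 X ω)

lemma prEq_le_prEq (hp0 : ∀ ω, 0 ≤ p ω) {X : Ω → S} {Y : Ω → T} {ω : Ω}
    (h : ∀ ω', X ω' = X ω → Y ω' = Y ω) :
    prEq p X (X ω) ≤ prEq p Y (Y ω) := by
  simp only [prEq_eq_sum_filter]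
  exact sum_le_sum_of_subset_of_nonneg (monotone_filter_right _ fun ω' _ => h ω')
    fun ω _ _ => hp0 ω

lemma prEq_congr {X : Ω → S} {Y : Ω → T} {ω : Ω} (h : ∀ ω', X ω' = X ω ↔ Y ω' = Y ω) :
    prEq p X (X ω) = prEq p Y (Y ω) := by
  simp only [prEq, h]

lemma sum_mul_comp_eq_sum_prEq (p : Ω → ℝ) (X : Ω → S) (F : S → ℝ) {Φ : Finset S}
    (hΦ : ∀ ω, X ω ∈ Φ) :
    ∑ ω, p ω * F (X ω) = ∑ s ∈ Φ, prEq p X s * F s := by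
  simp only [prEq_eq_sum_filter, sum_mul]
  rw [← sum_fiberwise_of_maps_to (g := X) fun ω _ => hΦ ω]
  refine sum_congr rfl fun s _ => sum_congr rfl fun ω hω => ?_
  rw [(mem_filter.mp hω).2]

lemma sum_prEq_eq_one (hp1 : ∑ ω, p ω = 1) (X : Ω → S) {Φ : Finset S} (hΦ : ∀ ω, X ω ∈ Φ) :
    ∑ s ∈ Φ, prEq p X s = 1 := by
  simpa [hp1] using (sum_mul_comp_eq_sum_prEq p X (fun _ => 1) hΦ).symm

lemma sum_prEq_pair_left (p : Ω → ℝ) (X : Ω → S) (Z : Ω → U) (z : U) {Φ : Finset S}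
    (hΦ : ∀ ω, X ω ∈ Φ) :
    ∑ x ∈ Φ, prEq p (fun ω => (X ω, Z ω)) (x, z) = prEq p Z z := by
  simp only [prEq]
  rw [sum_comm]
  refine sum_congr rfl fun ω _ => ?_
  simp [Prod.ext_iff, ite_and, hΦ ω]

end Distribution

section Entropy

variable {Ω : Type*} [Fintype Ω] {S T U : Type*} {p : Ω → ℝ}

lemma entropy_congr {X : Ω → S} {Y : Ω → T} (h : ∀ ω ω', X ω' = X ω ↔ Y ω' = Y ω) :
    entropy p X = entropy p Y := by
  simp only [entropy, prEq_congr (h _)]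

lemma entropy_le_entropy (hp0 : ∀ ω, 0 ≤ p ω) {X : Ω → S} {Y : Ω → T}
    (h : ∀ ω ω', X ω' = X ω → Y ω' = Y ω) : entropy p Y ≤ entropy p X := by
  refine neg_le_neg (sum_le_sum fun ω _ => ?_)
  rcases (hp0 ω).eq_or_lt with h0 | h0
  · simp [← h0]
  · exact mul_le_mul_of_nonneg_left
      (Real.log_le_log (prEq_self_pos hp0 X h0) (prEq_le_prEq hp0 (h ω))) h0.le

lemma sum_mul_log_nonpos (hp0 : ∀ ω, 0 ≤ p ω) (hp1 : ∑ ω, p ω = 1) {G : Ω → ℝ}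
    (hG : ∀ ω, 0 < p ω → 0 < G ω) (h : ∑ ω, p ω * G ω ≤ 1) :
    ∑ ω, p ω * Real.log (G ω) ≤ 0 :=
  calc ∑ ω, p ω * Real.log (G ω) ≤ ∑ ω, p ω * (G ω - 1) := sum_le_sum fun ω _ => by
        rcases (hp0 ω).eq_or_lt with h0 | h0
        · simp [← h0]
        · exact mul_le_mul_of_nonneg_left (Real.log_le_sub_one_of_pos (hG ω h0)) h0.le
    _ = ∑ ω, p ω * G ω - 1 := by simp only [mul_sub, mul_one, sum_sub_distrib, hp1]
    _ ≤ 0 := by linarith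

open scoped Classical in
/-- Grouped by the value of `(X, Y, Z)`, the sum is at most
`∑_{x,y,z} p(x,z) p(y,z) / p(z) = ∑_z p(z) = 1`. -/
lemma sum_mul_prEq_ratio_le_one (hp0 : ∀ ω, 0 ≤ p ω) (hp1 : ∑ ω, p ω = 1)
    (X : Ω → S) (Y : Ω → T) (Z : Ω → U) :
    ∑ ω, p ω * (prEq p (fun ω => (X ω, Z ω)) (X ω, Z ω) * prEq p (fun ω => (Y ω, Z ω)) (Y ω, Z ω)
      / (prEq p (fun ω => ((X ω, Y ω), Z ω)) ((X ω, Y ω), Z ω) * prEq p Z (Z ω))) ≤ 1 := by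
  set V : Ω → (S × T) × U := fun ω => ((X ω, Y ω), Z ω)
  set F : (S × T) × U → ℝ := fun v =>
    prEq p (fun ω => (X ω, Z ω)) (v.1.1, v.2) * prEq p (fun ω => (Y ω, Z ω)) (v.1.2, v.2)
      / prEq p Z v.2
  have hF : ∀ v, 0 ≤ F v := fun v => by
    have := prEq_nonneg hp0 (fun ω => (X ω, Z ω)) (v.1.1, v.2)
    have := prEq_nonneg hp0 (fun ω => (Y ω, Z ω)) (v.1.2, v.2)
    have := prEq_nonneg hp0 Z v.2
    positivity
  have hX : ∀ ω, X ω ∈ univ.image X := fun ω => mem_image_of_mem X (mem_univ ω)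
  have hY : ∀ ω, Y ω ∈ univ.image Y := fun ω => mem_image_of_mem Y (mem_univ ω)
  have hZ : ∀ ω, Z ω ∈ univ.image Z := fun ω => mem_image_of_mem Z (mem_univ ω)
  have hV : ∀ ω, V ω ∈ (univ.image X ×ˢ univ.image Y) ×ˢ univ.image Z := fun ω => by
    simp [V, hX, hY, hZ]
  calc _ = ∑ ω, p ω * (F (V ω) / prEq p V (V ω)) := by
        refine sum_congr rfl fun ω _ => ?_
        simp only [F, V, div_div, mul_comm (prEq p Z (Z ω))]
    _ = ∑ v ∈ (univ.image X ×ˢ univ.image Y) ×ˢ univ.image Z, prEq p V v * (F v / prEq p V v) :=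
        sum_mul_comp_eq_sum_prEq p V (fun v => F v / prEq p V v) hV
    _ ≤ ∑ v ∈ (univ.image X ×ˢ univ.image Y) ×ˢ univ.image Z, F v := by
        refine sum_le_sum fun v _ => ?_
        rcases (prEq_nonneg hp0 V v).eq_or_lt with h0 | h0
        · simp [← h0, hF v]
        · rw [mul_div_cancel₀ _ h0.ne']
    _ = ∑ z ∈ univ.image Z, prEq p Z z * prEq p Z z / prEq p Z z := by
        rw [sum_product_right]
        refine sum_congr rfl fun z _ => ?_
        simp only [F, sum_product, ← sum_div, ← sum_mul_sum]
        rw [sum_prEq_pair_left p X Z z hX, sum_prEq_pair_left p Y Z z hY]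
    _ = 1 := by simp only [mul_self_div_self, sum_prEq_eq_one hp1 Z hZ]

theorem entropy_submodular (hp0 : ∀ ω, 0 ≤ p ω) (hp1 : ∑ ω, p ω = 1)
    (X : Ω → S) (Y : Ω → T) (Z : Ω → U) :
    entropy p (fun ω => ((X ω, Y ω), Z ω)) + entropy p Z
      ≤ entropy p (fun ω => (X ω, Z ω)) + entropy p (fun ω => (Y ω, Z ω)) := by
  have hgibbs := sum_mul_log_nonpos hp0 hp1 (fun ω hω => by
    have := prEq_self_pos hp0 (fun ω => (X ω, Z ω)) hω
    have := prEq_self_pos hp0 (fun ω => (Y ω, Z ω)) hω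
    have := prEq_self_pos hp0 (fun ω => ((X ω, Y ω), Z ω)) hω
    have := prEq_self_pos hp0 Z hω
    positivity) (sum_mul_prEq_ratio_le_one hp0 hp1 X Y Z)
  have hlog : ∀ ω, p ω * Real.log
      (prEq p (fun ω => (X ω, Z ω)) (X ω, Z ω) * prEq p (fun ω => (Y ω, Z ω)) (Y ω, Z ω)
        / (prEq p (fun ω => ((X ω, Y ω), Z ω)) ((X ω, Y ω), Z ω) * prEq p Z (Z ω)))
      = p ω * Real.log (prEq p (fun ω => (X ω, Z ω)) (X ω, Z ω))
        + p ω * Real.log (prEq p (fun ω => (Y ω, Z ω)) (Y ω, Z ω))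
        - p ω * Real.log (prEq p (fun ω => ((X ω, Y ω), Z ω)) ((X ω, Y ω), Z ω))
        - p ω * Real.log (prEq p Z (Z ω)) := fun ω => by
    rcases (hp0 ω).eq_or_lt with h0 | h0
    · simp [← h0]
    · have hXZ := prEq_self_pos hp0 (fun ω => (X ω, Z ω)) h0
      have hYZ := prEq_self_pos hp0 (fun ω => (Y ω, Z ω)) h0
      have hV := prEq_self_pos hp0 (fun ω => ((X ω, Y ω), Z ω)) h0
      have hZ := prEq_self_pos hp0 Z h0
      rw [Real.log_div (by positivity) (by positivity), Real.log_mul hXZ.ne' hYZ.ne',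
        Real.log_mul hV.ne' hZ.ne']
      ring
  simp only [hlog, sum_sub_distrib, sum_add_distrib] at hgibbs
  simp only [entropy]
  linarith

end Entropy

section CondEntropy

variable {Ω : Type*} [Fintype Ω] {S T U : Type*} {p : Ω → ℝ}

lemma condEntropy_congr {X : Ω → S} {Y : Ω → T} (W : Ω → U)
    (h : ∀ ω ω', X ω' = X ω ↔ Y ω' = Y ω) :
    condEntropy p X W = condEntropy p Y W := by
  unfold condEntropy
  rw [entropy_congr (Y := fun ω => (Y ω, W ω)) fun ω ω' => by simp only [Prod.ext_iff, h ω ω']]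

lemma condEntropy_le_condEntropy (hp0 : ∀ ω, 0 ≤ p ω) {X : Ω → S} {Y : Ω → T} (W : Ω → U)
    (h : ∀ ω ω', X ω' = X ω → Y ω' = Y ω) :
    condEntropy p Y W ≤ condEntropy p X W := by
  unfold condEntropy
  gcongr
  exact entropy_le_entropy hp0 fun ω ω' hXW =>
    Prod.ext (h ω ω' (Prod.ext_iff.mp hXW).1) (Prod.ext_iff.mp hXW).2

lemma condEntropy_eq_zero_of_subsingleton [Subsingleton S] (X : Ω → S) (W : Ω → U) :
    condEntropy p X W = 0 := by
  rw [condEntropy, entropy_congr (Y := W) fun ω ω' => by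
    simp [Prod.ext_iff, Subsingleton.elim (X ω') (X ω)], sub_self]

lemma condEntropy_pair_le (hp0 : ∀ ω, 0 ≤ p ω) (hp1 : ∑ ω, p ω = 1)
    (X : Ω → S) (Y : Ω → T) (W : Ω → U) :
    condEntropy p (fun ω => (X ω, Y ω)) W ≤ condEntropy p X W + condEntropy p Y W := by
  have := entropy_submodular hp0 hp1 X Y W
  simp only [condEntropy]
  linarith

end CondEntropy

lemma tupleOn_eq_tupleOn_iff {Ω ι : Type*} {S : ι → Type*} (g : ∀ i, Ω → S i) (C : Finset ι)
    (ω ω' : Ω) : tupleOn g C ω = tupleOn g C ω' ↔ ∀ i ∈ C, g i ω = g i ω' :=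
  ⟨fun h i hi => congrFun h ⟨i, hi⟩, fun h => funext fun i => h i.1 i.2⟩

section Tuple

variable {Ω : Type*} [Fintype Ω] {U : Type*} {p : Ω → ℝ} {ι : Type*} {S : ι → Type*}

lemma condEntropy_tupleOn_union [DecidableEq ι] (g : ∀ i, Ω → S i) (C₁ C₂ : Finset ι)
    (W : Ω → U) :
    condEntropy p (tupleOn g (C₁ ∪ C₂)) W
      = condEntropy p (fun ω => (tupleOn g C₁ ω, tupleOn g C₂ ω)) W :=
  condEntropy_congr W fun ω ω' => by
    simp only [Prod.ext_iff, tupleOn_eq_tupleOn_iff, forall_mem_union]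

lemma condEntropy_tupleOn_mono (hp0 : ∀ ω, 0 ≤ p ω) (g : ∀ i, Ω → S i) {C₁ C₂ : Finset ι}
    (h : C₁ ⊆ C₂) (W : Ω → U) :
    condEntropy p (tupleOn g C₁) W ≤ condEntropy p (tupleOn g C₂) W :=
  condEntropy_le_condEntropy hp0 W fun ω ω' he => by
    rw [tupleOn_eq_tupleOn_iff] at he ⊢
    exact fun i hi => he i (h hi)

lemma condEntropy_tupleOn_le_sum [DecidableEq ι] (hp0 : ∀ ω, 0 ≤ p ω) (hp1 : ∑ ω, p ω = 1)
    (g : ∀ i, Ω → S i) (C : Finset ι) (W : Ω → U) :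
    condEntropy p (tupleOn g C) W ≤ ∑ i ∈ C, condEntropy p (g i) W := by
  induction C using Finset.induction with
  | empty => rw [condEntropy_eq_zero_of_subsingleton, sum_empty]
  | insert a C ha ih =>
    have hinsert : condEntropy p (tupleOn g (insert a C)) W
        = condEntropy p (fun ω => (g a ω, tupleOn g C ω)) W :=
      condEntropy_congr W fun ω ω' => by
        simp only [Prod.ext_iff, tupleOn_eq_tupleOn_iff, forall_mem_insert]
    rw [hinsert, sum_insert ha]
    linarith [condEntropy_pair_le hp0 hp1 (g a) (tupleOn g C) W]

lemma condEntropy_tupleOn_le_add_sum_sdiff [DecidableEq ι] (hp0 : ∀ ω, 0 ≤ p ω)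
    (hp1 : ∑ ω, p ω = 1) (g : ∀ i, Ω → S i) (C C' : Finset ι) (W : Ω → U) :
    condEntropy p (tupleOn g C) W
      ≤ condEntropy p (tupleOn g C') W + ∑ i ∈ C \ C', condEntropy p (g i) W :=
  calc condEntropy p (tupleOn g C) W ≤ condEntropy p (tupleOn g (C' ∪ C \ C')) W :=
        condEntropy_tupleOn_mono hp0 g le_sup_sdiff W
    _ ≤ condEntropy p (tupleOn g C') W + condEntropy p (tupleOn g (C \ C')) W := by
        rw [condEntropy_tupleOn_union]
        exact condEntropy_pair_le hp0 hp1 _ _ W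
    _ ≤ _ := by grw [condEntropy_tupleOn_le_sum hp0 hp1 g (C \ C') W]

end Tuple

lemma sup_sdiff_sup_of_disjoint {α : Type*} [GeneralizedBooleanAlgebra α] {a b a' b' : α}
    (ha : Disjoint a b') (hb : Disjoint b a') :
    (a ⊔ b) \ (a' ⊔ b') = a \ a' ⊔ b \ b' := by
  rw [sup_sdiff, ← sdiff_sdiff_left, sup_comm a', ← sdiff_sdiff_left,
    (ha.mono_left sdiff_le).sdiff_eq_left, (hb.mono_left sdiff_le).sdiff_eq_left]

theorem condMutualInfo_le_of_condIndep_general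
    {Ω : Type*} [Fintype Ω] {n : ℕ} {S T : Fin n → Type*}
    (p : Ω → ℝ) (hp0 : ∀ ω, 0 ≤ p ω) (hp1 : ∑ ω, p ω = 1)
    (Z : (i : Fin n) → Ω → S i) (f : (i : Fin n) → S i → T i)
    (A B D A' B' : Finset (Fin n))
    (hAB : Disjoint A B)
    (hA' : A' ⊆ A) (hB' : B' ⊆ B)
    (hindep : condEntropy p
        (tupleOn (fun i ω => f i (Z i ω)) ((A ∪ B) \ (A' ∪ B')))
        (tupleOn (fun i ω => f i (Z i ω)) D)
      = ∑ i ∈ (A ∪ B) \ (A' ∪ B'), condEntropy p (fun ω => f i (Z i ω))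
          (tupleOn (fun i ω => f i (Z i ω)) D)) :
    condMI p (tupleOn (fun i ω => f i (Z i ω)) A)
        (tupleOn (fun i ω => f i (Z i ω)) B)
        (tupleOn (fun i ω => f i (Z i ω)) D)
      ≤ condEntropy p (tupleOn (fun i ω => f i (Z i ω)) A')
          (tupleOn (fun i ω => f i (Z i ω)) D)
        + condEntropy p (tupleOn (fun i ω => f i (Z i ω)) B')
            (tupleOn (fun i ω => f i (Z i ω)) D) := by
  set g : (i : Fin n) → Ω → T i := fun i ω => f i (Z i ω)
  set W := tupleOn g D
  have hsplit : (A ∪ B) \ (A' ∪ B') = A \ A' ∪ B \ B' :=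
    sup_sdiff_sup_of_disjoint (hAB.mono_right hB') (hAB.symm.mono_right hA')
  have hindep_le : ∑ i ∈ A \ A', condEntropy p (g i) W + ∑ i ∈ B \ B', condEntropy p (g i) W
      ≤ condEntropy p (tupleOn g (A ∪ B)) W := by
    rw [← sum_union (hAB.mono sdiff_le sdiff_le), ← hsplit, ← hindep]
    exact condEntropy_tupleOn_mono hp0 g sdiff_subset W
  have hA := condEntropy_tupleOn_le_add_sum_sdiff hp0 hp1 g A A' W
  have hB := condEntropy_tupleOn_le_add_sum_sdiff hp0 hp1 g B B' W
  rw [condMI, ← condEntropy_tupleOn_union]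
  linarith

/-- Let `Z_1, …, Z_n` be random variables (on a common finite
probability space with pmf `p`) and `f_1, …, f_n` deterministic functions on their
respective ranges.  Let `A, B, D ⊆ [n]` be pairwise disjoint subsets and `A' ⊆ A`,
`B' ⊆ B` be such that the random variables `(f_i(Z_i))_{i ∈ (A∪B)\(A'∪B')}` are mutually
conditionally independent given `f_D(Z_D)` (expressed by the entropy characterization:
the conditional entropy of the tuple equals the sum of the conditional entropies).  Then
`I(f_A(Z_A); f_B(Z_B) | f_D(Z_D)) ≤ H(f_{A'}(Z_{A'}) | f_D(Z_D)) + H(f_{B'}(Z_{B'}) | f_D(Z_D))`. -/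
theorem condMutualInfo_le_of_condIndep
    {Ω : Type*} [Fintype Ω] {n : ℕ} {S T : Fin n → Type*}
    (p : Ω → ℝ) (hp0 : ∀ ω, 0 ≤ p ω) (hp1 : ∑ ω, p ω = 1)
    (Z : (i : Fin n) → Ω → S i) (f : (i : Fin n) → S i → T i)
    (A B D A' B' : Finset (Fin n))
    (hAB : Disjoint A B) (hAD : Disjoint A D) (hBD : Disjoint B D)
    (hA' : A' ⊆ A) (hB' : B' ⊆ B)
    (hindep : condEntropy p
        (tupleOn (fun i ω => f i (Z i ω)) ((A ∪ B) \ (A' ∪ B')))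
        (tupleOn (fun i ω => f i (Z i ω)) D)
      = ∑ i ∈ (A ∪ B) \ (A' ∪ B'), condEntropy p (fun ω => f i (Z i ω))
          (tupleOn (fun i ω => f i (Z i ω)) D)) :
    condMI p (tupleOn (fun i ω => f i (Z i ω)) A)
        (tupleOn (fun i ω => f i (Z i ω)) B)
        (tupleOn (fun i ω => f i (Z i ω)) D)
      ≤ condEntropy p (tupleOn (fun i ω => f i (Z i ω)) A')
          (tupleOn (fun i ω => f i (Z i ω)) D)
        + condEntropy p (tupleOn (fun i ω => f i (Z i ω)) B')
            (tupleOn (fun i ω => f i (Z i ω)) D) :=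
  condMutualInfo_le_of_condIndep_general p hp0 hp1 Z f A B D A' B' hAB hA' hB' hindep
end

section
/- Consider an optimal-distance convertible code in the global merge regime with parameters (k^I, g^I, r, l; λk^I, g^F, r, l) and λ ≥ 2. Then every global parity coordinate of the final code C^F is a new node: for every global parity coordinate i of C^F, there do not exist t ∈ [λ] and a coordinate j of C^I such that C^F(m)_i = C^I(m_{[k^I]^t})_j for all m ∈ F_q^{λk^I}. -/
open Finset

/-- The `j`-th message coordinate of the `t`-th block `[kI]^t` inside a merged
message of length `lam * kI`. -/
def blockIdx (lam kI : ℕ) (t : Fin lam) (j : Fin kI) : Fin (lam * kI) :=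
  ⟨t.val * kI + j.val, by
    calc t.val * kI + j.val < t.val * kI + kI := Nat.add_lt_add_left j.isLt _
    _ = (t.val + 1) * kI := by ring
    _ ≤ lam * kI := Nat.mul_le_mul_right kI t.isLt⟩

/-- The message of the `t`-th initial codeword, `m_{[kI]^t}`, extracted from the merged
message `m` of the final codeword. -/
def blockMsg {F : Type*} (lam kI : ℕ) (t : Fin lam) (m : Fin (lam * kI) → F) :
    Fin kI → F := fun j => m (blockIdx lam kI t j)

private lemma block_eq_aux {a b c d K : ℕ} (h : a * K + b = c * K + d) (hb : b < K)
    (hd : d < K) : a = c := by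
  rcases Nat.lt_trichotomy a c with h1 | h1 | h1
  · have h2 : (a + 1) * K ≤ c * K := Nat.mul_le_mul_right K (Nat.succ_le_of_lt h1)
    nlinarith
  · exact h1
  · have h2 : (c + 1) * K ≤ a * K := Nat.mul_le_mul_right K (Nat.succ_le_of_lt h1)
    nlinarith

/-- Consider an optimal-distance convertible code in the global merge
regime with parameters `(kI, gI, r, l; lam·kI, gF, r, l)` and `lam ≥ 2`: the initial code
`CI` is an optimal-distance `(kI, gI, r, l)`-LRC and the final code `CF` is an
optimal-distance `(lam·kI, gF, r, l)`-LRC, where the message of the final codeword is the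
concatenation of the `lam` initial messages.  Then every global parity coordinate `i` of
the final code is a new node: there do not exist `t ∈ [lam]` and a coordinate `j` of `CI`
such that `CF(m)_i = CI(m_{[kI]^t})_j` for all messages `m`. -/
theorem global_merge_final_global_parities_are_new
    {F : Type*} [Field F] [Fintype F] [DecidableEq F]
    {kI gI gF r l μ lam nI nF : ℕ} (hlam : 2 ≤ lam)
    (CI : (Fin kI → F) → (Fin nI → F)) (infoI : Fin kI ↪ Fin nI)
    (grpI : Fin kI → Fin μ) (lpI : Fin μ × Fin l ↪ Fin nI)
    (hI : IsLRC kI gI r l μ nI CI infoI grpI lpI)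
    (hIopt : codeMinDist CI = gI + l + 1)
    (CF : (Fin (lam * kI) → F) → (Fin nF → F)) (infoF : Fin (lam * kI) ↪ Fin nF)
    (grpF : Fin (lam * kI) → Fin (lam * μ)) (lpF : Fin (lam * μ) × Fin l ↪ Fin nF)
    (hF : IsLRC (lam * kI) gF r l (lam * μ) nF CF infoF grpF lpF)
    (hFopt : codeMinDist CF = gF + l + 1)
    (i : Fin nF) (hi_info : ∀ j, i ≠ infoF j) (hi_lp : ∀ pb, i ≠ lpF pb) :
    ¬ ∃ (t : Fin lam) (j : Fin nI), ∀ m : Fin (lam * kI) → F,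
        CF m i = CI (blockMsg lam kI t m) j := by
  classical
  rintro ⟨t, j, hij⟩
  have hkI : 0 < kI := by
    have hk := hI.hk
    have : 0 < r * μ := Nat.mul_pos hI.hr hI.hμ
    omega
  have h0 : (0 : ℕ) < lam := by omega
  have h1 : (1 : ℕ) < lam := by omega
  set t' : Fin lam := if t = ⟨0, h0⟩ then ⟨1, h1⟩ else ⟨0, h0⟩ with ht'def
  have htt' : t'.val ≠ t.val := by
    by_cases h : t = ⟨0, h0⟩
    · simp [ht'def, h]
    · simp only [ht'def, if_neg h]
      intro he
      exact h (Fin.ext he.symm)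
  set j0 : Fin (lam * kI) := blockIdx lam kI t' ⟨0, hkI⟩ with hj0def
  set m : Fin (lam * kI) → F := fun _ => (0 : F) with hmdef
  set m' : Fin (lam * kI) → F := Function.update m j0 1 with hm'def
  -- `j0` is not in block `t`
  have hblock : blockMsg lam kI t m = blockMsg lam kI t m' := by
    funext a
    show m (blockIdx lam kI t a) = m' (blockIdx lam kI t a)
    have hne : blockIdx lam kI t a ≠ j0 := by
      intro he
      have h2 : t.val * kI + a.val = t'.val * kI + 0 := congrArg Fin.val he
      exact htt' (block_eq_aux h2 a.isLt hkI).symm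
    rw [hm'def]
    exact (Function.update_of_ne hne 1 m).symm
  have hi_eq : CF m i = CF m' i := by rw [hij, hij, hblock]
  have hne : CF m (infoF j0) ≠ CF m' (infoF j0) := by
    rw [hF.systematic, hF.systematic, hm'def, Function.update_self]
    exact zero_ne_one
  have hle : codeMinDist CF ≤ hammingDist (CF m) (CF m') :=
    Nat.sInf_le ⟨m, m', fun h => hne (congrFun h (infoF j0)), rfl⟩
  set A : Finset (Fin nF) := univ.image infoF with hAdef
  set B : Finset (Fin nF) := univ.image (fun pb => lpF pb) with hBdef
  set G : Finset (Fin nF) := univ \ (A ∪ B) with hGdef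
  have hA : A.card = lam * kI := by
    rw [hAdef, card_image_of_injective _ infoF.injective, card_univ, Fintype.card_fin]
  have hB : B.card = lam * μ * l := by
    rw [hBdef, card_image_of_injective _ lpF.injective, card_univ]
    simp [Fintype.card_prod]
  have hAB : Disjoint A B := by
    rw [Finset.disjoint_left]
    rintro x hx hx'
    simp only [hAdef, hBdef, mem_image, mem_univ, true_and] at hx hx'
    obtain ⟨j1, rfl⟩ := hx
    obtain ⟨pb, hpb⟩ := hx'
    exact hF.lp_not_info pb j1 hpb
  have hG : G.card = gF := by
    have hU : (A ∪ B).card = lam * kI + lam * μ * l := by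
      rw [card_union_of_disjoint hAB, hA, hB]
    rw [hGdef, card_sdiff_of_subset (subset_univ _), card_univ, Fintype.card_fin, hU]
    have h7 := hF.hn
    omega
  have hiG : i ∈ G := by
    have hA1 : i ∉ A := by
      simp only [hAdef, mem_image, mem_univ, true_and, not_exists]
      intro j1 hj1
      exact hi_info j1 hj1.symm
    have hB1 : i ∉ B := by
      simp only [hBdef, mem_image, mem_univ, true_and, not_exists]
      intro pb hpb
      exact hi_lp pb hpb.symm
    simp [hGdef, hA1, hB1]
  have hgF : 1 ≤ gF := hG ▸ card_pos.mpr ⟨i, hiG⟩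
  set D : Finset (Fin nF) := univ.filter fun x => CF m x ≠ CF m' x with hDdef
  have hDsub : D ⊆ insert (infoF j0)
      ((univ.image fun b => lpF (grpF j0, b)) ∪ (G \ {i})) := by
    intro x hx
    simp only [hDdef, mem_filter, mem_univ, true_and] at hx
    by_cases hxA : x ∈ A
    · simp only [hAdef, mem_image, mem_univ, true_and] at hxA
      obtain ⟨j1, rfl⟩ := hxA
      have hj1 : j1 = j0 := by
        by_contra hne1
        apply hx
        rw [hF.systematic, hF.systematic, hm'def, Function.update_of_ne hne1]
      subst hj1
      exact mem_insert_self _ _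
    · by_cases hxB : x ∈ B
      · simp only [hBdef, mem_image, mem_univ, true_and] at hxB
        obtain ⟨⟨τ', b⟩, rfl⟩ := hxB
        have hττ : τ' = grpF j0 := by
          by_contra hne1
          apply hx
          apply hF.lp_local
          intro j1 hj1
          have hj1' : j1 ≠ j0 := by
            intro he
            exact hne1 (by rw [← he]; exact hj1.symm)
          rw [hm'def]
          exact (Function.update_of_ne hj1' 1 m).symm
        subst hττ
        exact mem_insert_of_mem (mem_union_left _ (mem_image_of_mem _ (mem_univ b)))
      · have hxG : x ∈ G := by simp [hGdef, hxA, hxB]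
        have hxi : x ≠ i := fun he => hx (he ▸ hi_eq)
        exact mem_insert_of_mem (mem_union_right _ (by simp [mem_sdiff, hxG, hxi]))
  have hDeq : hammingDist (CF m) (CF m') = D.card := rfl
  have hDcard : D.card ≤ 1 + (l + (gF - 1)) := by
    calc D.card ≤ (insert (infoF j0)
        ((univ.image fun b => lpF (grpF j0, b)) ∪ (G \ {i}))).card := card_le_card hDsub
      _ ≤ ((univ.image fun b => lpF (grpF j0, b)) ∪ (G \ {i})).card + 1 :=
        card_insert_le _ _
      _ ≤ ((univ.image fun b => lpF (grpF j0, b)).card + (G \ {i}).card) + 1 :=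
        Nat.add_le_add_right (card_union_le _ _) 1
      _ ≤ (l + (gF - 1)) + 1 := by
        have h5 : (univ.image fun b => lpF (grpF j0, b)).card ≤ l := by
          refine le_trans (card_image_le) ?_
          simp
        have h6 : (G \ {i}).card = gF - 1 := by
          rw [card_sdiff_of_subset (by simpa using hiG), hG, card_singleton]
        omega
      _ = 1 + (l + (gF - 1)) := by omega
  rw [hFopt, hDeq] at hle
  omega
end

section
/- Consider an optimal-distance convertible code in the global merge regime with parameters (k^I, g^I, r, l; λk^I, g^F, r, l), λ ≥ 2, and suppose k^I > r. Then every initial global parity node is retired: for every t ∈ [λ] and every global parity coordinate j of the initial code C^I, there is no coordinate i of the final code C^F with C^F(m)_i = C^I(m_{[k^I]^t})_j for all m ∈ F_q^{λk^I}. -/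
open Finset

lemma blockIdx_injective (lam kI : ℕ) (t : Fin lam) :
    Function.Injective (blockIdx lam kI t) := by
  intro a b h
  have h' := congrArg Fin.val h
  simp only [blockIdx] at h'
  exact Fin.ext (by omega)

/-- Extend a block message to a full message, filling with zeros. -/
noncomputable def extMsg {F : Type*} [Zero F] (lam kI : ℕ) (t : Fin lam)
    (m' : Fin kI → F) : Fin (lam * kI) → F :=
  fun q => if h : ∃ j0 : Fin kI, q = blockIdx lam kI t j0 then m' h.choose else 0

lemma extMsg_blockIdx {F : Type*} [Zero F] (lam kI : ℕ) (t : Fin lam)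
    (m' : Fin kI → F) (j0 : Fin kI) :
    extMsg lam kI t m' (blockIdx lam kI t j0) = m' j0 := by
  unfold extMsg
  have hex : ∃ j1 : Fin kI, blockIdx lam kI t j0 = blockIdx lam kI t j1 := ⟨j0, rfl⟩
  rw [dif_pos hex]
  exact congrArg m' (blockIdx_injective lam kI t hex.choose_spec).symm

lemma extMsg_eq_zero {F : Type*} [Zero F] (lam kI : ℕ) (t : Fin lam)
    (m' : Fin kI → F) (q : Fin (lam * kI)) (hq : ∀ j0, q ≠ blockIdx lam kI t j0) :
    extMsg lam kI t m' q = 0 := by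
  unfold extMsg
  rw [dif_neg]
  rintro ⟨j0, rfl⟩
  exact hq j0 rfl

lemma blockMsg_extMsg {F : Type*} [Zero F] (lam kI : ℕ) (t : Fin lam)
    (m' : Fin kI → F) : blockMsg lam kI t (extMsg lam kI t m') = m' := by
  funext j0
  exact extMsg_blockIdx lam kI t m' j0

/-- Key lemma: in an optimal-distance LRC, any coordinate whose value depends only on
a proper subset of the information coordinates must be an information coordinate or a
local parity coordinate. -/
lemma keyL {F : Type*} [DecidableEq F] [Zero F] [One F] (h01 : (0 : F) ≠ 1)
    {k g r l μ n : ℕ}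
    (C : (Fin k → F) → (Fin n → F)) (info : Fin k ↪ Fin n)
    (grp : Fin k → Fin μ) (lp : Fin μ × Fin l ↪ Fin n)
    (h : IsLRC k g r l μ n C info grp lp)
    (hopt : codeMinDist C = g + l + 1) (i : Fin n) (T : Finset (Fin k))
    (j'' : Fin k) (hj'' : j'' ∉ T)
    (hdep : ∀ m m' : Fin k → F, (∀ p ∈ T, m p = m' p) → C m i = C m' i) :
    (∃ p, i = info p) ∨ (∃ pb, i = lp pb) := by
  by_contra hcon
  push_neg at hcon
  obtain ⟨hni, hnl⟩ := hcon
  set m : Fin k → F := fun _ => 0 with hm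
  set m' : Fin k → F := Function.update m j'' 1 with hm'
  have hmm' : ∀ p, p ≠ j'' → m p = m' p := fun p hp =>
    (Function.update_of_ne hp _ _).symm
  have hne : C m ≠ C m' := by
    intro hE
    have hE2 := congrFun hE (info j'')
    rw [h.systematic, h.systematic] at hE2
    rw [hm', Function.update_self] at hE2
    exact h01 hE2
  have hle : codeMinDist C ≤ hammingDist (C m) (C m') := Nat.sInf_le ⟨m, m', hne, rfl⟩
  set G : Finset (Fin n) := univ \ ((univ.image info) ∪ (univ.image lp)) with hG
  have hmemG : ∀ q : Fin n, (∀ p, q ≠ info p) → (∀ pb, q ≠ lp pb) → q ∈ G := by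
    intro q h1 h2
    rw [hG, Finset.mem_sdiff]
    refine ⟨mem_univ _, ?_⟩
    rw [Finset.mem_union]
    rintro (hq | hq) <;> rw [Finset.mem_image] at hq
    · obtain ⟨p, _, rfl⟩ := hq; exact h1 p rfl
    · obtain ⟨pb, _, rfl⟩ := hq; exact h2 pb rfl
  have hiG : i ∈ G := hmemG i hni hnl
  have hGcard : G.card = g := by
    have h1 : (univ.image info).card = k := by
      rw [Finset.card_image_of_injective _ info.injective, card_univ, Fintype.card_fin]
    have h2 : (univ.image lp).card = μ * l := by
      rw [Finset.card_image_of_injective _ lp.injective, card_univ]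
      simp
    have hdisj : Disjoint (univ.image info) (univ.image lp) := by
      rw [Finset.disjoint_left]
      intro x hx hx'
      rw [Finset.mem_image] at hx hx'
      obtain ⟨p, _, rfl⟩ := hx
      obtain ⟨pb, _, hpb⟩ := hx'
      exact h.lp_not_info pb p hpb
    rw [hG, Finset.card_sdiff_of_subset (Finset.subset_univ _),
      Finset.card_union_of_disjoint hdisj, h1, h2, card_univ, Fintype.card_fin, h.hn]
    omega
  have hgpos : 1 ≤ g := hGcard ▸ Finset.card_pos.mpr ⟨i, hiG⟩
  have hsub : (univ.filter fun q => C m q ≠ C m' q) ⊆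
      insert (info j'') ((univ.image fun b => lp (grp j'', b)) ∪ G.erase i) := by
    intro q hq
    simp only [mem_filter, mem_univ, true_and] at hq
    by_cases hq1 : ∃ p, q = info p
    · obtain ⟨p, rfl⟩ := hq1
      have hp : p = j'' := by
        by_contra hpne
        exact hq (by rw [h.systematic, h.systematic]; exact hmm' p hpne)
      subst hp
      exact Finset.mem_insert_self _ _
    · by_cases hq2 : ∃ pb, q = lp pb
      · obtain ⟨⟨τ, b⟩, rfl⟩ := hq2
        have hτ : τ = grp j'' := by
          by_contra hτne
          refine hq (h.lp_local τ b m m' ?_)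
          intro p hp
          refine hmm' p ?_
          rintro rfl
          exact hτne hp.symm
        subst hτ
        exact Finset.mem_insert_of_mem
          (Finset.mem_union_left _ (Finset.mem_image.mpr ⟨b, mem_univ _, rfl⟩))
      · push_neg at hq1 hq2
        have hqG : q ∈ G := hmemG q hq1 hq2
        have hqi : q ≠ i := by
          rintro rfl
          exact hq (hdep m m' (fun p hp => hmm' p (fun hpe => hj'' (hpe ▸ hp))))
        exact Finset.mem_insert_of_mem
          (Finset.mem_union_right _ (Finset.mem_erase.mpr ⟨hqi, hqG⟩))
  have hcard : hammingDist (C m) (C m') ≤ 1 + (l + (g - 1)) := by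
    have h1 : hammingDist (C m) (C m') =
        (univ.filter fun q => C m q ≠ C m' q).card := rfl
    rw [h1]
    calc (univ.filter fun q => C m q ≠ C m' q).card
        ≤ (insert (info j'') ((univ.image fun b => lp (grp j'', b)) ∪ G.erase i)).card :=
          Finset.card_le_card hsub
      _ ≤ 1 + ((univ.image fun b => lp (grp j'', b)) ∪ G.erase i).card := by
          rw [add_comm]; exact Finset.card_insert_le _ _
      _ ≤ 1 + ((univ.image fun b => lp (grp j'', b)).card + (G.erase i).card) :=
          Nat.add_le_add_left (Finset.card_union_le _ _) _
      _ ≤ 1 + (l + (g - 1)) := by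
          refine Nat.add_le_add_left (Nat.add_le_add ?_ ?_) _
          · calc (univ.image fun b => lp (grp j'', b)).card
                ≤ (univ : Finset (Fin l)).card := Finset.card_image_le
              _ = l := by rw [card_univ, Fintype.card_fin]
          · rw [Finset.card_erase_of_mem hiG, hGcard]
  rw [hopt] at hle
  omega

/-- Consider an optimal-distance convertible code in the global merge
regime with parameters `(kI, gI, r, l; lam·kI, gF, r, l)`, `lam ≥ 2`, and suppose
`kI > r`.  Then every initial global parity node is retired: for every `t ∈ [lam]` and
every global parity coordinate `j` of the initial code `CI` (a coordinate that is neither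
an information coordinate nor a local parity coordinate of `CI`), there is no coordinate
`i` of the final code `CF` with `CF(m)_i = CI(m_{[kI]^t})_j` for all messages `m`. -/
theorem global_merge_initial_global_parities_are_retired
    {F : Type*} [Field F] [Fintype F] [DecidableEq F]
    {kI gI gF r l μ lam nI nF : ℕ} (hlam : 2 ≤ lam) (hkIr : r < kI)
    (CI : (Fin kI → F) → (Fin nI → F)) (infoI : Fin kI ↪ Fin nI)
    (grpI : Fin kI → Fin μ) (lpI : Fin μ × Fin l ↪ Fin nI)
    (hI : IsLRC kI gI r l μ nI CI infoI grpI lpI)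
    (hIopt : codeMinDist CI = gI + l + 1)
    (CF : (Fin (lam * kI) → F) → (Fin nF → F)) (infoF : Fin (lam * kI) ↪ Fin nF)
    (grpF : Fin (lam * kI) → Fin (lam * μ)) (lpF : Fin (lam * μ) × Fin l ↪ Fin nF)
    (hF : IsLRC (lam * kI) gF r l (lam * μ) nF CF infoF grpF lpF)
    (hFopt : codeMinDist CF = gF + l + 1)
    (t : Fin lam) (j : Fin nI)
    (hj_info : ∀ j' : Fin kI, j ≠ infoI j') (hj_lp : ∀ pb : Fin μ × Fin l, j ≠ lpI pb) :
    ¬ ∃ i : Fin nF, ∀ m : Fin (lam * kI) → F,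
        CF m i = CI (blockMsg lam kI t m) j := by
  rintro ⟨i, hi⟩
  have h01 : (0 : F) ≠ 1 := zero_ne_one
  have hkI2 : 2 ≤ kI := by have := hI.hr; omega
  -- helper: find element outside a small finset
  -- Step 1: apply keyL to the final code with T = image of block t
  set T : Finset (Fin (lam * kI)) := univ.image (blockIdx lam kI t) with hT
  have hTcard : T.card = kI := by
    rw [hT, Finset.card_image_of_injective _ (blockIdx_injective lam kI t), card_univ,
      Fintype.card_fin]
  have hTlt : T.card < (univ : Finset (Fin (lam * kI))).card := by
    rw [hTcard, card_univ, Fintype.card_fin]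
    calc kI = 1 * kI := (one_mul kI).symm
      _ < lam * kI := Nat.mul_lt_mul_of_lt_of_le (by omega) (le_refl kI) (by omega)
  have hTne : T ≠ univ := by
    intro hTu
    rw [hTu] at hTlt
    exact lt_irrefl _ hTlt
  obtain ⟨j'', -, hj''⟩ := Finset.exists_of_ssubset (Finset.ssubset_univ_iff.mpr hTne)
  have hdepF : ∀ m m' : Fin (lam * kI) → F,
      (∀ p ∈ T, m p = m' p) → CF m i = CF m' i := by
    intro m m' hag
    rw [hi, hi]
    congr 1
    funext j0
    exact hag (blockIdx lam kI t j0) (Finset.mem_image.mpr ⟨j0, mem_univ _, rfl⟩)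
  have hkey := keyL h01 CF infoF grpF lpF hF hFopt i T j'' hj'' hdepF
  -- helper for the initial code: a small dependency set for CI at j gives a contradiction
  have hIcontr : ∀ T' : Finset (Fin kI), T'.card < kI →
      (∀ m1 m2 : Fin kI → F, (∀ p ∈ T', m1 p = m2 p) → CI m1 j = CI m2 j) → False := by
    intro T' hT' hdep'
    have hT'lt : T'.card < (univ : Finset (Fin kI)).card := by
      rwa [card_univ, Fintype.card_fin]
    have hT'ne : T' ≠ univ := by
      intro hTu
      rw [hTu] at hT'lt
      exact lt_irrefl _ hT'lt
    obtain ⟨j2, -, hj2⟩ := Finset.exists_of_ssubset (Finset.ssubset_univ_iff.mpr hT'ne)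
    rcases keyL h01 CI infoI grpI lpI hI hIopt j T' j2 hj2 hdep' with ⟨p, hp⟩ | ⟨pb, hpb⟩
    · exact hj_info p hp
    · exact hj_lp pb hpb
  rcases hkey with ⟨p, hp⟩ | ⟨⟨τ, b⟩, hpb⟩
  · -- i is an information coordinate of CF
    by_cases hpT : ∃ j0, p = blockIdx lam kI t j0
    · obtain ⟨j0, rfl⟩ := hpT
      have hform : ∀ m' : Fin kI → F, CI m' j = m' j0 := by
        intro m'
        have h1 := hi (extMsg lam kI t m')
        rw [hp, hF.systematic, blockMsg_extMsg, extMsg_blockIdx] at h1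
        exact h1.symm
      refine hIcontr {j0} (by simp; omega) ?_
      intro m1 m2 hag
      rw [hform, hform]
      exact hag j0 (Finset.mem_singleton_self j0)
    · push_neg at hpT
      set m : Fin (lam * kI) → F := fun _ => 0 with hm
      set m2 : Fin (lam * kI) → F := Function.update m p 1 with hm2
      have hbm : blockMsg lam kI t m = blockMsg lam kI t m2 := by
        funext j0
        show m (blockIdx lam kI t j0) = m2 (blockIdx lam kI t j0)
        rw [hm2, Function.update_of_ne (fun he => hpT j0 he.symm)]
      have h1 := hi m
      have h2 := hi m2
      rw [hp, hF.systematic] at h1 h2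
      rw [hbm] at h1
      rw [← h2] at h1
      rw [hm2, Function.update_self] at h1
      exact h01 h1
  · -- i is a local parity coordinate of CF, for group τ
    set T' : Finset (Fin kI) :=
      univ.filter (fun j0 => grpF (blockIdx lam kI t j0) = τ) with hT'
    have hT'card : T'.card ≤ r := by
      have hsub : T'.image (blockIdx lam kI t) ⊆ univ.filter (fun q => grpF q = τ) := by
        intro q hq
        rw [Finset.mem_image] at hq
        obtain ⟨j0, hj0, rfl⟩ := hq
        rw [hT', Finset.mem_filter] at hj0
        exact Finset.mem_filter.mpr ⟨mem_univ _, hj0.2⟩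
      calc T'.card = (T'.image (blockIdx lam kI t)).card :=
            (Finset.card_image_of_injective _ (blockIdx_injective lam kI t)).symm
        _ ≤ (univ.filter (fun q => grpF q = τ)).card := Finset.card_le_card hsub
        _ = r := hF.grp_card τ
    refine hIcontr T' (lt_of_le_of_lt hT'card hkIr) ?_
    intro m1 m2 hag
    have e1 := hi (extMsg lam kI t m1)
    have e2 := hi (extMsg lam kI t m2)
    rw [blockMsg_extMsg] at e1 e2
    rw [← e1, ← e2, hpb]
    refine hF.lp_local τ b _ _ ?_
    intro q hq
    by_cases hqb : ∃ j0, q = blockIdx lam kI t j0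
    · obtain ⟨j0, rfl⟩ := hqb
      rw [extMsg_blockIdx, extMsg_blockIdx]
      refine hag j0 ?_
      rw [hT', Finset.mem_filter]
      exact ⟨mem_univ _, hq⟩
    · push_neg at hqb
      rw [extMsg_eq_zero lam kI t m1 q hqb, extMsg_eq_zero lam kI t m2 q hqb]
end

section
/- Consider an optimal-distance convertible code in the global merge regime with parameters (k^I, g^I, r, l; λk^I, g^F, r, l), λ ≥ 2. Suppose a final coordinate i is an unchanged node matched to a local parity coordinate j of local group τ of the t-th initial codeword (i.e., j is a local parity coordinate of group τ of C^I and C^F(m)_i = C^I(m_{[k^I]^t})_j for all m ∈ F_q^{λk^I}), and suppose i is a local parity coordinate of a local group τ' of the final code C^F. Then the set of message coordinates of the final group τ' equals the set of message coordinates of group τ of the initial code viewed inside the block [k^I]^t; that is, the unchanged local parity node serves as a local parity node for the same set of information nodes in the final codeword as in the initial codeword. -/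
open Finset

/-- Consider an optimal-distance convertible code in the global merge
regime with parameters `(kI, gI, r, l; lam·kI, gF, r, l)`, `lam ≥ 2`.  Suppose a final
coordinate `i` is an unchanged node matched to the local parity coordinate `lpI (τ, b)`
of local group `τ` of the `t`-th initial codeword (i.e. `CF(m)_i = CI(m_{[kI]^t})_{lpI (τ,b)}`
for all messages `m`), and suppose `i` is a local parity coordinate `lpF (τ', b')` of a
local group `τ'` of the final code.  Then the set of message coordinates of the final
group `τ'` equals the set of message coordinates of group `τ` of the initial code viewed
inside the block `[kI]^t`: the unchanged local parity node serves as a local parity node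
for the same set of information nodes in the final codeword as in the initial one. -/
theorem global_merge_unchanged_local_parity_same_group
    {F : Type*} [Field F] [Fintype F] [DecidableEq F]
    {kI gI gF r l μ lam nI nF : ℕ} (hlam : 2 ≤ lam)
    (CI : (Fin kI → F) → (Fin nI → F)) (infoI : Fin kI ↪ Fin nI)
    (grpI : Fin kI → Fin μ) (lpI : Fin μ × Fin l ↪ Fin nI)
    (hI : IsLRC kI gI r l μ nI CI infoI grpI lpI)
    (hIopt : codeMinDist CI = gI + l + 1)
    (CF : (Fin (lam * kI) → F) → (Fin nF → F)) (infoF : Fin (lam * kI) ↪ Fin nF)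
    (grpF : Fin (lam * kI) → Fin (lam * μ)) (lpF : Fin (lam * μ) × Fin l ↪ Fin nF)
    (hF : IsLRC (lam * kI) gF r l (lam * μ) nF CF infoF grpF lpF)
    (hFopt : codeMinDist CF = gF + l + 1)
    (t : Fin lam) (τ : Fin μ) (b : Fin l) (i : Fin nF) (τ' : Fin (lam * μ)) (b' : Fin l)
    (hunchanged : ∀ m : Fin (lam * kI) → F, CF m i = CI (blockMsg lam kI t m) (lpI (τ, b)))
    (hi : i = lpF (τ', b')) :
    Finset.univ.filter (fun j : Fin (lam * kI) => grpF j = τ')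
      = (Finset.univ.filter (fun j : Fin kI => grpI j = τ)).image (blockIdx lam kI t) := by
  classical
  have hinjBI : Function.Injective (blockIdx lam kI t) := by
    intro a a' h
    have := congrArg Fin.val h
    simp only [blockIdx] at this
    exact Fin.ext (by omega)
  set A := Finset.univ.filter (fun j : Fin (lam * kI) => grpF j = τ') with hA
  set B := (Finset.univ.filter (fun j : Fin kI => grpI j = τ)).image (blockIdx lam kI t)
    with hB
  have hcardB : B.card = r := by
    rw [hB, Finset.card_image_of_injective _ hinjBI, hI.grp_card τ]
  have hcardA : A.card = r := hF.grp_card τ'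
  have hAB : A ⊆ B := by
    intro j hj
    have hgj : grpF j = τ' := (Finset.mem_filter.1 hj).2
    by_contra hjB
    set m : Fin (lam * kI) → F := fun _ => 0 with hm
    set m' : Fin (lam * kI) → F := fun j' => if j' = j then 1 else 0 with hm'
    -- the unchanged node's value is the same for m and m'
    have hieq : CF m i = CF m' i := by
      rw [hunchanged m, hunchanged m']
      apply hI.lp_local τ b
      intro j'' hj''
      have hne : blockIdx lam kI t j'' ≠ j := by
        intro h
        exact hjB (Finset.mem_image.2 ⟨j'',
          Finset.mem_filter.2 ⟨Finset.mem_univ _, hj''⟩, h⟩)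
      simp [blockMsg, hm, hm', hne]
    -- the codewords differ at infoF j
    have hdiff : CF m (infoF j) ≠ CF m' (infoF j) := by
      rw [hF.systematic m j, hF.systematic m' j]
      simp [hm, hm']
    set I : Finset (Fin nF) := (Finset.univ.filter fun j' => grpF j' = τ').image infoF
      with hIdef
    set L : Finset (Fin nF) := Finset.univ.image (fun b => lpF (τ', b)) with hLdef
    have hmemI : infoF j ∈ I := Finset.mem_image.2 ⟨j, hj, rfl⟩
    have hloc := hF.locality τ' m m' ⟨infoF j, Finset.mem_union_left _ hmemI, hdiff⟩
    set p : Fin nF → Prop := fun x => CF m x ≠ CF m' x with hp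
    have hfilterI : (I.filter p).card ≤ 1 := by
      have hsub : I.filter p ⊆ {infoF j} := by
        intro x hx
        obtain ⟨hxI, hxp⟩ := Finset.mem_filter.1 hx
        obtain ⟨j', _, rfl⟩ := Finset.mem_image.1 hxI
        have : m j' ≠ m' j' := by
          rw [← hF.systematic m j', ← hF.systematic m' j']; exact hxp
        have : j' = j := by
          by_contra hne
          simp [hm, hm', hne] at this
        simp [this]
      simpa using Finset.card_le_card hsub
    have hcardL : L.card = l := by
      rw [hLdef, Finset.card_image_of_injective, Finset.card_univ, Fintype.card_fin]
      intro a a' h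
      have := lpF.injective h
      exact (Prod.mk.injEq _ _ _ _ ▸ this).2
    have hLge : l ≤ (L.filter p).card := by
      have h1 : ((I ∪ L).filter p).card ≤ (I.filter p).card + (L.filter p).card := by
        rw [Finset.filter_union]
        exact Finset.card_union_le _ _
      have hloc' : l + 1 ≤ ((I ∪ L).filter p).card := hloc
      omega
    have hLeq : L.filter p = L :=
      Finset.eq_of_subset_of_card_le (Finset.filter_subset _ _) (by omega)
    have hiL : i ∈ L := by
      rw [hLdef, hi]
      exact Finset.mem_image.2 ⟨b', Finset.mem_univ _, rfl⟩
    have : p i := (Finset.mem_filter.1 (hLeq ▸ hiL)).2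
    exact this hieq
  exact Finset.eq_of_subset_of_card_le hAB (by omega)
end
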